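/- Let f_1, …, f_s ∈ 𝕋[x_1,…,x_n]. Then Z(f_1,…,f_s) = ∅ (there is no a ∈ 𝕋^n with f_i(a) ∈ 𝕌̄ for all i) if and only if some f_i is a constant polynomial C c with tangible value c ∈ ℝ. -/

import Mathlib

/-- The extended tropical semiring `𝕋`: tangible reals `(a, false)`,
ghost reals `(a, true)`, and `none` = `-∞`. -/
def T : Type := Option (ℝ × Bool)

namespace T

/-- The tangible element of value `a`. -/
def tang (a : ℝ) : T := some (a, false)

/-- The ghost element `a^ν` of value `a`. -/
def ghost (a : ℝ) : T := some (a, true)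

/-- Tropical addition on `𝕋`. -/
noncomputable def add : T → T → T
  | none, y => y
  | some p, none => some p
  | some (a, s), some (b, t) =>
      if a < b then some (b, t) else if b < a then some (a, s) else some (a, true)

/-- Tropical multiplication on `𝕋`. -/
noncomputable def mul : T → T → T
  | none, _ => none
  | some _, none => none
  | some (a, s), some (b, t) => some (a + b, s || t)

lemma add_assoc' : ∀ x y z : T, add (add x y) z = add x (add y z) := by
  rintro (_ | ⟨a, s⟩) (_ | ⟨b, t⟩) (_ | ⟨c, u⟩) <;>
    simp only [add] <;>
    (try unfold T) <;>
    (try split_ifs) <;>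
    simp only [add] <;>
    (try unfold T) <;>
    (try split_ifs) <;>
    first
      | rfl
      | (exfalso; linarith)
      | (refine congrArg some ?_; refine Prod.ext ?_ ?_ <;>
          first | rfl | linarith | simp)

lemma add_comm' : ∀ x y : T, add x y = add y x := by
  rintro (_ | ⟨a, s⟩) (_ | ⟨b, t⟩) <;>
    simp only [add] <;>
    (try unfold T) <;>
    (try split_ifs) <;>
    first
      | rfl
      | (exfalso; linarith)
      | (refine congrArg some ?_; refine Prod.ext ?_ ?_ <;>
          first | rfl | linarith | simp)

lemma mul_assoc' : ∀ x y z : T, mul (mul x y) z = mul x (mul y z) := by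
  rintro (_ | ⟨a, s⟩) (_ | ⟨b, t⟩) (_ | ⟨c, u⟩) <;>
    simp [mul, add_assoc, Bool.or_assoc] <;> rfl

lemma mul_comm' : ∀ x y : T, mul x y = mul y x := by
  rintro (_ | ⟨a, s⟩) (_ | ⟨b, t⟩) <;> simp [mul, add_comm, Bool.or_comm] <;> rfl

lemma left_distrib' : ∀ x y z : T, mul x (add y z) = add (mul x y) (mul x z) := by
  rintro (_ | ⟨a, s⟩) (_ | ⟨b, t⟩) (_ | ⟨c, u⟩) <;>
    simp only [add, mul] <;>
    (try unfold T) <;>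
    (try split_ifs) <;>
    simp only [add, mul] <;>
    (try unfold T) <;>
    (try split_ifs) <;>
    first
      | rfl
      | (exfalso; linarith)
      | (refine congrArg some ?_; refine Prod.ext ?_ ?_ <;>
          first | rfl | linarith | simp)

noncomputable instance : Zero T := ⟨none⟩
noncomputable instance : One T := ⟨some (0, false)⟩
noncomputable instance : Add T := ⟨add⟩
noncomputable instance : Mul T := ⟨mul⟩

noncomputable instance : CommSemiring T where
  add := (· + ·)
  zero := 0
  add_assoc := add_assoc'
  zero_add := fun x => by cases x <;> rfl
  add_zero := fun x => by cases x <;> rfl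
  add_comm := add_comm'
  mul := (· * ·)
  one := 1
  mul_assoc := mul_assoc'
  one_mul := fun x => by
    show mul (some (0, false)) x = x
    rcases x with _ | ⟨a, s⟩ <;> simp [mul] <;> rfl
  mul_one := fun x => by
    show mul x (some (0, false)) = x
    rcases x with _ | ⟨a, s⟩ <;> simp [mul] <;> rfl
  mul_comm := mul_comm'
  zero_mul := fun x => by cases x <;> rfl
  mul_zero := fun x => by cases x <;> rfl
  left_distrib := left_distrib'
  right_distrib := fun x y z => by
    show mul (add x y) z = add (mul x z) (mul y z)
    rw [mul_comm', left_distrib', mul_comm' z x, mul_comm' z y]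
  nsmul := nsmulRec

/-- Membership in the ghost part `𝕌̄ = 𝕌 ∪ {-∞}` of `𝕋`. -/
def isGhost : T → Prop
  | none => True
  | some (_, s) => s = true

/-- Membership in the tangible part `ℝ ∪ {-∞}` of `𝕋`. -/
def isTangible : T → Prop
  | none => True
  | some (_, s) => s = false

/-- The underlying real value (junk value `0` at `-∞`); this is `π` on elements `≠ -∞`. -/
def val : T → ℝ
  | none => 0
  | some (a, _) => a

/-- The ghost map `ν`. -/
def nu : T → T
  | none => none
  | some (a, _) => some (a, true)

end T

namespace T

/-- The model value in the half line `[0,∞)`: `-∞ ↦ 0`, an element of value `a ↦ exp a`. -/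
noncomputable def gval : T → ℝ
  | none => 0
  | some (a, _) => Real.exp a

lemma nu_isGhost : ∀ x : T, isGhost (nu x)
  | none => trivial
  | some (_, _) => rfl

lemma gval_injOn_tang : Set.InjOn gval {x : T | isTangible x} := by
  rintro (_ | ⟨a, s⟩) hx (_ | ⟨b, t⟩) hy h <;>
    simp only [gval, Set.mem_setOf_eq, isTangible] at hx hy h
  · rfl
  · exact absurd h.symm (Real.exp_pos b).ne'
  · exact absurd h (Real.exp_pos a).ne'
  · rw [Real.exp_eq_exp] at h; subst hx; subst hy; subst h; rfl

lemma gval_injOn_ghost : Set.InjOn gval {x : T | isGhost x} := by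
  rintro (_ | ⟨a, s⟩) hx (_ | ⟨b, t⟩) hy h <;>
    simp only [gval, Set.mem_setOf_eq, isGhost] at hx hy h
  · rfl
  · exact absurd h.symm (Real.exp_pos b).ne'
  · exact absurd h (Real.exp_pos a).ne'
  · rw [Real.exp_eq_exp] at h; subst hx; subst hy; subst h; rfl

lemma gval_image_tang : gval '' {x : T | isTangible x} = Set.Ici 0 := by
  ext y
  constructor
  · rintro ⟨(_ | ⟨a, s⟩), hx, rfl⟩
    · exact Set.self_mem_Ici
    · exact le_of_lt (by simpa [gval] using Real.exp_pos a)
  · intro hy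
    rcases eq_or_lt_of_le (Set.mem_Ici.mp hy : (0 : ℝ) ≤ y) with h | h
    · exact ⟨none, trivial, h⟩
    · exact ⟨some (Real.log y, false), rfl, by simp [gval, Real.exp_log h]⟩

lemma gval_image_ghost : gval '' {x : T | isGhost x} = Set.Ici 0 := by
  ext y
  constructor
  · rintro ⟨(_ | ⟨a, s⟩), hx, rfl⟩
    · exact Set.self_mem_Ici
    · exact le_of_lt (by simpa [gval] using Real.exp_pos a)
  · intro hy
    rcases eq_or_lt_of_le (Set.mem_Ici.mp hy : (0 : ℝ) ≤ y) with h | h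
    · exact ⟨none, trivial, h⟩
    · exact ⟨some (Real.log y, true), rfl, by simp [gval, Real.exp_log h]⟩

/-- The closed sets of the topology on `𝕋`: both the tangible and the ghost layers are
closed in the model `[0,∞)` of `𝕌̄`, and the ghost image of the tangible layer is
contained in the set. -/
def TIsClosed (W : Set T) : Prop :=
  IsClosed (gval '' (W ∩ {x | isTangible x})) ∧
  IsClosed (gval '' (W ∩ {x | isGhost x})) ∧
  nu '' (W ∩ {x | isTangible x}) ⊆ W ∩ {x | isGhost x}

/-- The topology on `𝕋`. -/
noncomputable instance : TopologicalSpace T :=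
  TopologicalSpace.ofClosed {W | TIsClosed W}
    (by
      refine ⟨?_, ?_, ?_⟩ <;> simp [TIsClosed])
    (fun A hA => by
      rcases A.eq_empty_or_nonempty with rfl | hne
      · rw [Set.sInter_empty]
        refine ⟨?_, ?_, ?_⟩
        · rw [Set.univ_inter, gval_image_tang]; exact isClosed_Ici
        · rw [Set.univ_inter, gval_image_ghost]; exact isClosed_Ici
        · rintro y ⟨x, ⟨-, _⟩, rfl⟩
          exact ⟨trivial, nu_isGhost x⟩
      · have : Nonempty A := hne.to_subtype
        have h1 : (⋂₀ A) ∩ {x : T | isTangible x}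
            = ⋂ (W : A), ((W : Set T) ∩ {x | isTangible x}) := by
          ext x
          simp only [Set.mem_inter_iff, Set.mem_sInter, Set.mem_iInter, Set.mem_setOf_eq]
          constructor
          · rintro ⟨h, ht⟩ W; exact ⟨h W W.2, ht⟩
          · intro h
            obtain ⟨W, hW⟩ := hne
            exact ⟨fun V hV => (h ⟨V, hV⟩).1, (h ⟨W, hW⟩).2⟩
        have h2 : (⋂₀ A) ∩ {x : T | isGhost x}
            = ⋂ (W : A), ((W : Set T) ∩ {x | isGhost x}) := by
          ext x
          simp only [Set.mem_inter_iff, Set.mem_sInter, Set.mem_iInter, Set.mem_setOf_eq]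
          constructor
          · rintro ⟨h, ht⟩ W; exact ⟨h W W.2, ht⟩
          · intro h
            obtain ⟨W, hW⟩ := hne
            exact ⟨fun V hV => (h ⟨V, hV⟩).1, (h ⟨W, hW⟩).2⟩
        refine ⟨?_, ?_, ?_⟩
        · rw [h1, Set.InjOn.image_iInter_eq
            (gval_injOn_tang.mono (Set.iUnion_subset fun W => Set.inter_subset_right))]
          exact isClosed_iInter fun W => (hA W.2).1
        · rw [h2, Set.InjOn.image_iInter_eq
            (gval_injOn_ghost.mono (Set.iUnion_subset fun W => Set.inter_subset_right))]
          exact isClosed_iInter fun W => (hA W.2).2.1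
        · rintro y ⟨x, ⟨hx, hxt⟩, rfl⟩
          refine ⟨fun W hW => ((hA hW).2.2 ⟨x, ⟨hx W hW, hxt⟩, rfl⟩).1, nu_isGhost x⟩)
    (fun A hA B hB => by
      have h1 : (A ∪ B) ∩ {x : T | isTangible x}
          = (A ∩ {x | isTangible x}) ∪ (B ∩ {x | isTangible x}) :=
        Set.union_inter_distrib_right A B _
      have h2 : (A ∪ B) ∩ {x : T | isGhost x}
          = (A ∩ {x | isGhost x}) ∪ (B ∩ {x | isGhost x}) :=
        Set.union_inter_distrib_right A B _
      refine ⟨?_, ?_, ?_⟩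
      · rw [h1, Set.image_union]; exact hA.1.union hB.1
      · rw [h2, Set.image_union]; exact hA.2.1.union hB.2.1
      · rintro y ⟨x, ⟨hx, hxt⟩, rfl⟩
        rcases hx with hxA | hxB
        · have h := hA.2.2 ⟨x, ⟨hxA, hxt⟩, rfl⟩
          exact ⟨Or.inl h.1, h.2⟩
        · have h := hB.2.2 ⟨x, ⟨hxB, hxt⟩, rfl⟩
          exact ⟨Or.inr h.1, h.2⟩)

end T

/-! A tangible constant `c` never evaluates into `𝕌̄`. Conversely, if no `fᵢ` is a tangible
constant, all of them take ghost values at the point `(M^ν, …, M^ν)` once `M` is large.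
A constant that is not tangible is ghost. Otherwise every nonconstant monomial is ghost at that
point (it has a ghost factor), and the value `π(q) + |d| M` of a fixed nonconstant monomial
`q x^d` eventually exceeds the constant term; a ghost summand at least as large as the only
possibly tangible one makes the tropical sum ghost. -/

namespace T

lemma add_some_of_lt {a b : ℝ} (h : a < b) (s t : Bool) :
    T.add (some (a, s)) (some (b, t)) = some (b, t) :=
  if_pos h

lemma add_some_of_gt {a b : ℝ} (h : b < a) (s t : Bool) :
    T.add (some (a, s)) (some (b, t)) = some (a, s) :=
  (if_neg h.not_gt).trans (if_pos h)

lemma add_some_self (a : ℝ) (s t : Bool) :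
    T.add (some (a, s)) (some (a, t)) = some (a, true) :=
  (if_neg (lt_irrefl a)).trans (if_neg (lt_irrefl a))

lemma isGhost_ghost (a : ℝ) : isGhost (ghost a) :=
  rfl

lemma not_isGhost_tang (c : ℝ) : ¬ isGhost (tang c) :=
  Bool.false_ne_true

lemma isGhost_of_forall_ne_tang {x : T} (hx : ∀ c, x ≠ tang c) : isGhost x := by
  rcases x with _ | ⟨a, _ | _⟩
  · trivial
  · exact absurd rfl (hx a)
  · rfl

lemma isGhost_mul_right {x : T} (hx : isGhost x) (y : T) : isGhost (x * y) := by
  rcases x with _ | ⟨a, s⟩ <;> rcases y with _ | ⟨b, t⟩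
  any_goals trivial
  exact show (s || t) = true by rw [show s = true from hx, Bool.true_or]

lemma isGhost_mul_left {y : T} (hy : isGhost y) (x : T) : isGhost (x * y) :=
  mul_comm y x ▸ isGhost_mul_right hy x

lemma isGhost_add {x y : T} (hx : isGhost x) (hy : isGhost y) : isGhost (x + y) := by
  rcases x with _ | ⟨a, s⟩ <;> rcases y with _ | ⟨b, t⟩
  any_goals assumption
  change isGhost (T.add (some (a, s)) (some (b, t)))
  rcases lt_trichotomy a b with h | rfl | h
  · rwa [add_some_of_lt h]
  · rw [add_some_self]; rfl
  · rwa [add_some_of_gt h]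

lemma isGhost_sum {ι : Type*} (s : Finset ι) {g : ι → T} (hg : ∀ i ∈ s, isGhost (g i)) :
    isGhost (∑ i ∈ s, g i) :=
  Finset.sum_induction g isGhost (fun _ _ => isGhost_add) trivial hg

lemma ghost_pow {k : ℕ} (hk : k ≠ 0) (a : ℝ) : ghost a ^ k = ghost (k * a) := by
  induction k, Nat.one_le_iff_ne_zero.2 hk using Nat.le_induction with
  | base => simp
  | succ k hk ih =>
    rw [pow_succ, ih (by omega), Nat.cast_succ, add_one_mul]
    rfl

lemma mul_ghost {x : T} (hx : x ≠ 0) (b : ℝ) : x * ghost b = ghost (val x + b) := by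
  rcases x with _ | ⟨a, s⟩
  · exact absurd rfl hx
  · exact show some (a + b, s || true) = some (a + b, true) by rw [Bool.or_true]

lemma exists_ghost_add_eq {y : T} (hy : isGhost y) (b : ℝ) :
    ∃ b', b ≤ b' ∧ ghost b + y = ghost b' := by
  rcases y with _ | ⟨c, t⟩
  · exact ⟨b, le_rfl, add_zero _⟩
  · obtain rfl : t = true := hy
    change ∃ b', b ≤ b' ∧ T.add (some (b, true)) (some (c, true)) = some (b', true)
    rcases lt_trichotomy b c with h | rfl | h
    · exact ⟨c, h.le, add_some_of_lt h _ _⟩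
    · exact ⟨b, le_rfl, add_some_self _ _ _⟩
    · exact ⟨b, le_rfl, add_some_of_gt h _ _⟩

lemma isGhost_add_ghost_of_val_le {x : T} {b : ℝ} (h : val x ≤ b) : isGhost (x + ghost b) := by
  rcases x with _ | ⟨a, s⟩
  · rfl
  · change a ≤ b at h
    change isGhost (T.add (some (a, s)) (some (b, true)))
    rcases h.lt_or_eq with h | rfl
    · rw [add_some_of_lt h]; rfl
    · rw [add_some_self]; rfl

lemma isGhost_sum_of_dominated {ι : Type*} [DecidableEq ι] {s : Finset ι} {g : ι → T}
    {i₀ j : ι} (hj : j ∈ s) (hji₀ : j ≠ i₀) (hg : ∀ i ∈ s, i ≠ i₀ → isGhost (g i))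
    {b : ℝ} (hgj : g j = ghost b) (hdom : val (g i₀) ≤ b) : isGhost (∑ i ∈ s, g i) := by
  by_cases hi₀ : i₀ ∈ s
  · have hrest : isGhost (∑ i ∈ (s.erase i₀).erase j, g i) :=
      isGhost_sum _ fun i hi => hg i (Finset.mem_of_mem_erase (Finset.mem_of_mem_erase hi))
        (Finset.ne_of_mem_erase (Finset.mem_of_mem_erase hi))
    obtain ⟨b', hbb', hb'⟩ := exists_ghost_add_eq hrest b
    rw [← Finset.add_sum_erase _ _ hi₀,
      ← Finset.add_sum_erase _ _ (Finset.mem_erase.2 ⟨hji₀, hj⟩), hgj, hb']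
    exact isGhost_add_ghost_of_val_le (hdom.trans hbb')
  · exact isGhost_sum _ fun i hi => hg i hi (ne_of_mem_of_not_mem hi hi₀)

open MvPolynomial Filter

variable {σ : Type*} [Fintype σ]

lemma eval_const_ghost (f : MvPolynomial σ T) (M : ℝ) :
    eval (fun _ => ghost M) f = ∑ d ∈ f.support, coeff d f * ghost M ^ d.degree := by
  simp only [eval_eq', Finset.prod_pow_eq_pow_sum, Finsupp.degree_eq_sum]

lemma isGhost_eval_const_ghost_of_mem_support {f : MvPolynomial σ T} {d₀ : σ →₀ ℕ}
    (hd₀ : d₀ ∈ f.support) (hd₀0 : d₀ ≠ 0) {M : ℝ} (hM0 : 0 ≤ M)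
    (hM : val (coeff 0 f) ≤ val (coeff d₀ f) + M) :
    isGhost (eval (fun _ => ghost M) f) := by
  have hk : d₀.degree ≠ 0 := (Finsupp.degree_eq_zero_iff d₀).not.2 hd₀0
  have hMk : M ≤ d₀.degree * M :=
    le_mul_of_one_le_left hM0 (Nat.one_le_cast.2 (Nat.one_le_iff_ne_zero.2 hk))
  rw [eval_const_ghost]
  refine isGhost_sum_of_dominated (i₀ := 0) hd₀ hd₀0 (fun d _ hd => ?_)
    (by rw [ghost_pow hk, mul_ghost (mem_support_iff.1 hd₀)]) ?_
  · rw [ghost_pow ((Finsupp.degree_eq_zero_iff d).not.2 hd)]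
    exact isGhost_mul_left (isGhost_ghost _) _
  · rw [map_zero, pow_zero, mul_one]
    linarith

lemma eventually_isGhost_eval_const_ghost {f : MvPolynomial σ T} (hf : ∀ c, f ≠ C (tang c)) :
    ∀ᶠ M in atTop, isGhost (eval (fun _ => ghost M) f) := by
  by_cases hdeg : f.totalDegree = 0
  · rw [totalDegree_eq_zero_iff_eq_C] at hdeg
    refine Eventually.of_forall fun M => ?_
    rw [hdeg, eval_C]
    exact isGhost_of_forall_ne_tang fun c hc => hf c (by rw [hdeg, hc])
  obtain ⟨d₀, hd₀, j, hj⟩ : ∃ d ∈ f.support, ∃ j, d j ≠ 0 := by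
    simpa [totalDegree_eq_zero_iff] using hdeg
  filter_upwards [eventually_ge_atTop 0,
    eventually_ge_atTop (val (coeff 0 f) - val (coeff d₀ f))] with M hM0 hM
  exact isGhost_eval_const_ghost_of_mem_support hd₀ (fun h => hj (by rw [h]; rfl)) hM0
    (by linarith)

end T

/-- Corollary `thm:emptyVar`: `Z(f_1,…,f_s) = ∅` iff one of the `f_i`
is a tangible constant. -/
theorem tropical_empty_iff_tangible_constant (n s : ℕ)
    (f : Fin s → MvPolynomial (Fin n) T) :
    (¬ ∃ a : Fin n → T, ∀ i, T.isGhost (MvPolynomial.eval a (f i)))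
      ↔ ∃ i, ∃ c : ℝ, f i = MvPolynomial.C (T.tang c) := by
  constructor
  · intro hZ
    by_contra! hf
    obtain ⟨M, hM⟩ := (Filter.eventually_all.2 fun i =>
      T.eventually_isGhost_eval_const_ghost (hf i)).exists
    exact hZ ⟨fun _ => T.ghost M, hM⟩
  · rintro ⟨i, c, hi⟩ ⟨a, ha⟩
    exact T.not_isGhost_tang c (by simpa [hi] using ha i)
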